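/- Let G be an unmixed graph as in the setup, additionally satisfying: x_iy_j ∈ E(G) implies i ≤ j, and G contains no cycle C_{ij}. Then #E(G) ≤ n(n+1)/2. -/

import Mathlib

open SimpleGraph

/-- `C` is a vertex cover of `G`. -/
def IsVC {V : Type*} (G : SimpleGraph V) (C : Set V) : Prop :=
  ∀ ⦃u v : V⦄, G.Adj u v → u ∈ C ∨ v ∈ C

/-- `C` is a minimal (inclusion-wise) vertex cover of `G`. -/
def IsMinVC {V : Type*} (G : SimpleGraph V) (C : Set V) : Prop :=
  IsVC G C ∧ ∀ C' : Set V, C' ⊆ C → IsVC G C' → C' = C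

/-- `A` is an independent set of `G`. -/
def IsIndep {V : Type*} (G : SimpleGraph V) (A : Set V) : Prop :=
  ∀ ⦃u v : V⦄, u ∈ A → v ∈ A → ¬ G.Adj u v

/-- `A` is a maximal independent set of `G`. -/
def IsMaxIndep {V : Type*} (G : SimpleGraph V) (A : Set V) : Prop :=
  IsIndep G A ∧ ∀ A' : Set V, A ⊆ A' → IsIndep G A' → A' = A

/-- `G` is unmixed: all minimal vertex covers have the same cardinality. -/
def Unmixed {V : Type*} (G : SimpleGraph V) : Prop :=
  ∀ C₁ C₂ : Set V, IsMinVC G C₁ → IsMinVC G C₂ → C₁.ncard = C₂.ncard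

/-- Vertex type with the two classes `X = {x_1,…,x_n}` (left) and `Y = {y_1,…,y_n}` (right). -/
abbrev VT (n : ℕ) := Fin n ⊕ Fin n

/-- The vertex `x_i`. -/
def xv {n : ℕ} (i : Fin n) : VT n := Sum.inl i

/-- The vertex `y_i`. -/
def yv {n : ℕ} (i : Fin n) : VT n := Sum.inr i

/-- The 4-cycle `C_{ij}` (edges `x_iy_i, y_ix_j, x_jy_j, y_jx_i`) is contained in `G`. -/
def HasC2 {n : ℕ} (G : SimpleGraph (VT n)) (i j : Fin n) : Prop :=
  G.Adj (xv i) (yv i) ∧ G.Adj (yv i) (xv j) ∧ G.Adj (xv j) (yv j) ∧ G.Adj (yv j) (xv i)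

/-- The `2r`-cycle `C_{i_1…i_r}` given by `f : Fin r → Fin n` is contained in `G`:
edges `x_{f s} y_{f s}` and `y_{f s} x_{f (s+1)}` (cyclically). -/
def IsCycleIn {n r : ℕ} (G : SimpleGraph (VT n)) (f : Fin r → Fin n) : Prop :=
  ∀ s : Fin r, G.Adj (xv (f s)) (yv (f s)) ∧ G.Adj (yv (f s)) (xv (f (finRotate r s)))

/-!
Projecting `x_i, y_i ↦ i` sends every edge to an unordered pair of indices, and this map is
injective on edges, so `#E(G) ≤ #Sym2 (Fin n) = n(n+1)/2`. By the ordering condition every edge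
is `x_i w` with `i` at most the index of `w`, so two edges with the same image would be `x_i x_j`
and `x_i y_j`. Unmixedness rules this out: a maximal independent set through `x_i` has a minimal
vertex cover as complement, hence `2n - n = n` elements, one from each matching edge `x_k y_k`;
but it can contain neither `x_j` nor `y_j`.
-/

section General

variable {V : Type*} {G : SimpleGraph V}

theorem IsMaxIndep.isMinVC_compl {B : Set V} (hB : IsMaxIndep G B) : IsMinVC G Bᶜ := by
  refine ⟨fun u v huv => ?_, fun C hCB hC => hCB.antisymm fun v hv => ?_⟩
  · by_contra! h
    exact hB.1 (not_not.mp h.1) (not_not.mp h.2) huv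
  · by_contra hvC
    obtain ⟨u, huB, huv⟩ : ∃ u ∈ B, G.Adj u v := by
      by_contra! hno
      have hind : IsIndep G (insert v B) := by
        rintro a b (rfl | ha) (rfl | hb) hab
        · exact G.irrefl hab
        · exact hno b hb hab.symm
        · exact hno a ha hab
        · exact hB.1 ha hb hab
      exact hv (hB.2 _ (Set.subset_insert _ _) hind ▸ Set.mem_insert v B)
    exact (hC huv).elim (fun h => hCB h huB) hvC

theorem exists_isMaxIndep_superset [Finite V] {A : Set V} (hA : IsIndep G A) :
    ∃ B, A ⊆ B ∧ IsMaxIndep G B := by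
  obtain ⟨B, hAB, hB⟩ := Finite.exists_le_maximal (p := IsIndep G) hA
  exact ⟨B, hAB, hB.1, fun A' hBA' hA' => (hB.2 hA' hBA').antisymm hBA'⟩

theorem Unmixed.ncard_add_ncard [Finite V] (hu : Unmixed G) {B C : Set V}
    (hB : IsMaxIndep G B) (hC : IsMinVC G C) : B.ncard + C.ncard = Nat.card V := by
  rw [← hu _ _ hB.isMinVC_compl hC, Set.ncard_add_ncard_compl]

end General

section Bipartition

variable {n : ℕ}

def vertexIndex : VT n → Fin n := Sum.elim id id

@[simp] theorem vertexIndex_xv (i : Fin n) : vertexIndex (xv i) = i := rfl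

theorem ncard_range_xv : (Set.range (xv : Fin n → VT n)).ncard = n := by
  rw [Set.ncard_range_of_injective (f := (xv : Fin n → VT n)) Sum.inl_injective,
    Nat.card_eq_fintype_card, Fintype.card_fin]

variable {G : SimpleGraph (VT n)}

theorem IsIndep.injOn_vertexIndex (hm : ∀ i : Fin n, G.Adj (xv i) (yv i)) {B : Set (VT n)}
    (hB : IsIndep G B) : Set.InjOn vertexIndex B := by
  rintro (a | a) ha (b | b) hb (rfl : a = b)
  · rfl
  · exact absurd (hm a) (hB ha hb)
  · exact absurd (hm a) (hB hb ha)
  · rfl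

theorem IsIndep.xv_mem_or_yv_mem (hm : ∀ i : Fin n, G.Adj (xv i) (yv i)) {B : Set (VT n)}
    (hB : IsIndep G B) (hcard : B.ncard = n) (k : Fin n) : xv k ∈ B ∨ yv k ∈ B := by
  have himage : vertexIndex '' B = Set.univ := by
    rw [Set.eq_univ_iff_ncard, (hB.injOn_vertexIndex hm).ncard_image, hcard,
      Nat.card_eq_fintype_card, Fintype.card_fin]
  obtain ⟨(a | a), ha, rfl⟩ := himage.symm ▸ Set.mem_univ k
  exacts [.inl ha, .inr ha]

theorem Unmixed.not_adj_xv_of_adj_yv (hm : ∀ i : Fin n, G.Adj (xv i) (yv i))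
    (hX : IsMinVC G (Set.range (xv : Fin n → VT n))) (hu : Unmixed G) {i j : Fin n}
    (hxy : G.Adj (xv i) (yv j)) : ¬ G.Adj (xv i) (xv j) := by
  intro hxx
  obtain ⟨B, hiB, hB⟩ := exists_isMaxIndep_superset (A := {xv i}) (G := G)
    (by rintro _ _ rfl rfl h; exact G.irrefl h)
  have hcard : B.ncard = n := by
    have := hu.ncard_add_ncard hB hX
    rw [ncard_range_xv, Nat.card_eq_fintype_card, Fintype.card_sum, Fintype.card_fin] at this
    omega
  have hxi : xv i ∈ B := hiB rfl
  rcases hB.1.xv_mem_or_yv_mem hm hcard j with h | h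
  exacts [hB.1 hxi h hxx, hB.1 hxi h hxy]

theorem exists_eq_xv_of_mem_edgeSet (hY : IsIndep G (Set.range yv))
    (ho : ∀ i j : Fin n, G.Adj (xv i) (yv j) → i ≤ j) {e : Sym2 (VT n)}
    (he : e ∈ G.edgeSet) :
    ∃ i w, e = s(xv i, w) ∧ i ≤ vertexIndex w ∧ G.Adj (xv i) w := by
  induction e using Sym2.ind with | _ u v => ?_
  rw [mem_edgeSet] at he
  rcases u with a | a <;> rcases v with b | b
  · rcases le_total a b with hab | hab
    · exact ⟨a, xv b, rfl, hab, he⟩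
    · exact ⟨b, xv a, Sym2.eq_swap, hab, he.symm⟩
  · exact ⟨a, yv b, rfl, ho a b he, he⟩
  · exact ⟨b, yv a, Sym2.eq_swap, ho b a he.symm, he.symm⟩
  · exact absurd he (hY ⟨a, rfl⟩ ⟨b, rfl⟩)

theorem injOn_map_vertexIndex_edgeSet (hY : IsIndep G (Set.range yv))
    (ho : ∀ i j : Fin n, G.Adj (xv i) (yv j) → i ≤ j)
    (hxy : ∀ i j : Fin n, G.Adj (xv i) (yv j) → ¬ G.Adj (xv i) (xv j)) :
    Set.InjOn (Sym2.map vertexIndex) G.edgeSet := by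
  intro e he e' he' heq
  obtain ⟨i, w, rfl, hiw, hw⟩ := exists_eq_xv_of_mem_edgeSet hY ho he
  obtain ⟨i', w', rfl, hiw', hw'⟩ := exists_eq_xv_of_mem_edgeSet hY ho he'
  obtain ⟨rfl, hvertexIndex⟩ : i = i' ∧ vertexIndex w = vertexIndex w' := by
    simp only [Sym2.map_mk, vertexIndex_xv, Sym2.eq_iff] at heq
    rcases heq with h | ⟨h₁, h₂⟩
    · exact h
    · have hii : i = i' := le_antisymm (hiw.trans h₂.le) (hiw'.trans h₁.ge)
      exact ⟨hii, h₂.trans (hii.symm.trans h₁)⟩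
  rcases w with j | j <;> rcases w' with j' | j' <;> obtain rfl : j = j' := hvertexIndex
  · rfl
  · exact absurd hw (hxy i j hw')
  · exact absurd hw' (hxy i j hw)
  · rfl

end Bipartition

theorem CM_edge_bound_general {n : ℕ} (G : SimpleGraph (VT n)) [DecidableRel G.Adj]
    (hX : IsMinVC G (Set.range (xv : Fin n → VT n)))
    (hY : IsMaxIndep G (Set.range (yv : Fin n → VT n)))
    (hm : ∀ i : Fin n, G.Adj (xv i) (yv i))
    (hu : Unmixed G)
    (ho : ∀ i j : Fin n, G.Adj (xv i) (yv j) → i ≤ j) :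
    G.edgeFinset.card ≤ n * (n + 1) / 2 := by
  have hinj : Set.InjOn (Sym2.map vertexIndex) (G.edgeFinset : Set (Sym2 (VT n))) := by
    rw [coe_edgeFinset]
    exact injOn_map_vertexIndex_edgeSet hY.1 ho fun _ _ => hu.not_adj_xv_of_adj_yv hm hX
  calc G.edgeFinset.card ≤ Fintype.card (Sym2 (Fin n)) :=
        Finset.card_le_card_of_injOn _ (fun _ _ => Finset.mem_coe.2 (Finset.mem_univ _)) hinj
    _ = n * (n + 1) / 2 := by
        rw [Sym2.card, Fintype.card_fin, Nat.choose_two_right, Nat.add_sub_cancel, Nat.mul_comm]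

/-- For an unmixed graph `G` in the setup (*) satisfying (**) (`x_iy_j ∈ E(G) ⟹ i ≤ j`)
and containing no cycle `C_{ij}`, the number of edges is at most `n(n+1)/2`. -/
theorem CM_edge_bound {n : ℕ} (G : SimpleGraph (VT n)) [DecidableRel G.Adj]
    (hni : ∀ v : VT n, ∃ u : VT n, G.Adj u v)
    (hX : IsMinVC G (Set.range (xv : Fin n → VT n)))
    (hY : IsMaxIndep G (Set.range (yv : Fin n → VT n)))
    (hm : ∀ i : Fin n, G.Adj (xv i) (yv i))
    (hht : ∀ C : Set (VT n), IsVC G C → n ≤ C.ncard)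
    (hu : Unmixed G)
    (ho : ∀ i j : Fin n, G.Adj (xv i) (yv j) → i ≤ j)
    (h2 : ∀ i j : Fin n, i < j → ¬ HasC2 G i j) :
    G.edgeFinset.card ≤ n * (n + 1) / 2 :=
  CM_edge_bound_general G hX hY hm hu ho
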